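/- With the same setup as Proposition 3 (exchangeable positive joint p on subsets of {1,…,n}), define S_CCV(y_{1:n}; P) = Σ_{p=1}^P S_CV(y_{1:n}; p). Then S_CCV(y_{1:n}; P) = (1/C(n,P)) Σ_{|T|=P} log( p(y_{1:n}) / p(y_{T^c}) ), i.e., the average over all P-element test sets T of the log conditional probability of the test set given the training set. -/

import Mathlib

open Finset

/-! With `A p` the average of `log m Tᶜ` over the `p`-subsets `T`, the leave-one-out term
is `log (m (insert j Tᶜ) / m Tᶜ) = log m (T.erase j)ᶜ - log m Tᶜ`. Every `(p-1)`-subset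
arises as `T.erase j` from exactly `n - p + 1` pairs `(T, j)`, so together with
`p * C(n, p) = (n - p + 1) * C(n, p - 1)` the score `S_CV(p)` equals `A (p - 1) - A p`.
Summing over `p` telescopes to `A 0 - A P = log m univ - A P`. -/

theorem Finset.sum_Icc_one_pred_sub {M : Type*} [AddCommGroup M] (a : ℕ → M) (P : ℕ) :
    ∑ p ∈ Icc 1 P, (a (p - 1) - a p) = a 0 - a P := by
  induction P with
  | zero => simp
  | succ P ih =>
    rw [sum_Icc_succ_top (by omega), ih, Nat.add_sub_cancel]
    abel

theorem Finset.sum_powersetCard_succ_sum_erase {α M : Type*} [DecidableEq α]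
    [AddCommMonoid M] (s : Finset α) (p : ℕ) (F : Finset α → M) :
    ∑ T ∈ s.powersetCard (p + 1), ∑ j ∈ T, F (T.erase j) =
      (#s - p) • ∑ S ∈ s.powersetCard p, F S := by
  calc ∑ T ∈ s.powersetCard (p + 1), ∑ j ∈ T, F (T.erase j)
      = ∑ x ∈ (s.powersetCard (p + 1)).sigma id, F (x.1.erase x.2) := sum_sigma' _ _ _
    _ = ∑ x ∈ (s.powersetCard p).sigma (s \ ·), F x.1 := by
      refine sum_nbij' (fun x => ⟨x.1.erase x.2, x.2⟩) (fun x => ⟨insert x.2 x.1, x.2⟩)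
        ?_ ?_ ?_ ?_ (fun _ _ => rfl)
      · rintro ⟨T, j⟩ h
        simp only [mem_sigma, mem_powersetCard, id] at h ⊢
        obtain ⟨⟨hTs, hcard⟩, hj⟩ := h
        refine ⟨⟨(erase_subset j T).trans hTs, by rw [card_erase_of_mem hj, hcard]; rfl⟩,
          ?_⟩
        simp [hTs hj]
      · rintro ⟨S, j⟩ h
        simp only [mem_sigma, mem_powersetCard, mem_sdiff, id] at h ⊢
        obtain ⟨⟨hSs, hcard⟩, hjs, hjS⟩ := h
        exact ⟨⟨insert_subset hjs hSs, by rw [card_insert_of_notMem hjS, hcard]⟩,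
          mem_insert_self _ _⟩
      · rintro ⟨T, j⟩ h
        simp only [mem_sigma, id] at h
        simp [insert_erase h.2]
      · rintro ⟨S, j⟩ h
        simp [erase_insert (mem_sdiff.1 (mem_sigma.1 h).2).2]
    _ = ∑ S ∈ s.powersetCard p, #(s \ S) • F S := by
      simp only [sum_sigma, sum_const]
    _ = (#s - p) • ∑ S ∈ s.powersetCard p, F S := by
      rw [smul_sum]
      refine sum_congr rfl fun S hS => ?_
      obtain ⟨hSs, hcard⟩ := mem_powersetCard.1 hS
      rw [card_sdiff_of_subset hSs, hcard]

noncomputable def powersetCardAvg {α : Type*} (s : Finset α) (p : ℕ) (g : Finset α → ℝ) :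
    ℝ :=
  ((#s).choose p : ℝ)⁻¹ * ∑ T ∈ s.powersetCard p, g T

theorem powersetCardAvg_zero {α : Type*} (s : Finset α) (g : Finset α → ℝ) :
    powersetCardAvg s 0 g = g ∅ := by
  simp [powersetCardAvg]

theorem inv_choose_mul_sum_powersetCard_sub {α : Type*} {s : Finset α} {p : ℕ} (hp : p ≤ #s)
    (c : ℝ) (g : Finset α → ℝ) :
    ((#s).choose p : ℝ)⁻¹ * ∑ T ∈ s.powersetCard p, (c - g T) =
      c - powersetCardAvg s p g := by
  have hC : ((#s).choose p : ℝ) ≠ 0 := Nat.cast_ne_zero.2 (Nat.choose_pos hp).ne'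
  rw [powersetCardAvg, sum_sub_distrib, sum_const, card_powersetCard, nsmul_eq_mul]
  field_simp

theorem powersetCardAvg_leaveOneOut {α : Type*} [DecidableEq α] {s : Finset α} {p : ℕ}
    (hp1 : 1 ≤ p) (hp : p ≤ #s) (g : Finset α → ℝ) :
    ((#s).choose p : ℝ)⁻¹ *
        ∑ T ∈ s.powersetCard p, (p : ℝ)⁻¹ * ∑ j ∈ T, (g (T.erase j) - g T) =
      powersetCardAvg s (p - 1) g - powersetCardAvg s p g := by
  obtain ⟨q, rfl⟩ : ∃ q, p = q + 1 := ⟨p - 1, by omega⟩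
  have hsum : ∀ T ∈ s.powersetCard (q + 1), ∑ j ∈ T, (g (T.erase j) - g T) =
      ∑ j ∈ T, g (T.erase j) - (q + 1 : ℝ) * g T := fun T hT => by
    rw [sum_sub_distrib, sum_const, (mem_powersetCard.1 hT).2, nsmul_eq_mul]
    push_cast
    ring
  rw [← mul_sum, sum_congr rfl hsum, sum_sub_distrib, sum_powersetCard_succ_sum_erase,
    ← mul_sum, nsmul_eq_mul, Nat.cast_sub (by omega), powersetCardAvg, powersetCardAvg,
    Nat.add_sub_cancel]
  have hPascal : ((#s).choose (q + 1) : ℝ) * (q + 1) = ((#s).choose q) * (#s - q) := by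
    rw [← Nat.cast_sub (by omega)]
    exact_mod_cast Nat.choose_succ_right_eq (#s) q
  have hC : ((#s).choose q : ℝ) ≠ 0 := Nat.cast_ne_zero.2 (Nat.choose_pos (by omega)).ne'
  have hC' : ((#s).choose (q + 1) : ℝ) ≠ 0 := Nat.cast_ne_zero.2 (Nat.choose_pos hp).ne'
  push_cast
  field_simp
  linear_combination (-∑ S ∈ s.powersetCard q, g S) * hPascal

theorem sum_Icc_powersetCardAvg_leaveOneOut {α : Type*} [DecidableEq α] {s : Finset α} {P : ℕ}
    (hP : P ≤ #s) (g : Finset α → ℝ) :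
    ∑ p ∈ Icc 1 P, ((#s).choose p : ℝ)⁻¹ *
      ∑ T ∈ s.powersetCard p, (p : ℝ)⁻¹ * ∑ j ∈ T, (g (T.erase j) - g T) =
    ((#s).choose P : ℝ)⁻¹ * ∑ T ∈ s.powersetCard P, (g ∅ - g T) := by
  rw [sum_congr rfl fun p hp => powersetCardAvg_leaveOneOut (mem_Icc.1 hp).1
      ((mem_Icc.1 hp).2.trans hP) g, sum_Icc_one_pred_sub (powersetCardAvg s · g),
    powersetCardAvg_zero, inv_choose_mul_sum_powersetCard_sub hP]

theorem stmt6_general (n : ℕ)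
    (m : Finset (Fin n) → ℝ)
    (hpos : ∀ S, 0 < m S)
    (P : ℕ) (hP2 : P ≤ n - 1) :
    ∑ p ∈ Finset.Icc 1 P, ((n.choose p : ℝ))⁻¹ *
      ∑ T ∈ (Finset.univ : Finset (Fin n)).powersetCard p, (p : ℝ)⁻¹ *
        ∑ j ∈ T, Real.log (m (insert j Tᶜ) / m Tᶜ) =
    ((n.choose P : ℝ))⁻¹ *
      ∑ T ∈ (Finset.univ : Finset (Fin n)).powersetCard P,
        Real.log (m (Finset.univ : Finset (Fin n)) / m Tᶜ) := by
  have key := sum_Icc_powersetCardAvg_leaveOneOut (s := univ) (P := P)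
    (by rw [card_fin]; omega) fun T => Real.log (m Tᶜ)
  simpa only [card_fin, compl_erase, compl_empty, Real.log_div (hpos _).ne' (hpos _).ne'] using key

/-- Corollary (Supplementary) of Fong & Holmes: the cumulative cross-validation score
`S_CCV(y_{1:n}; P) = Σ_{p=1}^P S_CV(y_{1:n}; p)` equals the average over all
`P`-element test sets `T` of the log conditional probability
`log (p(y_{1:n}) / p(y_{T^c}))` of the test set given the training set. -/
theorem stmt6 {Y : Type*} (n : ℕ) (y : Fin n → Y)
    (m : Finset (Fin n) → ℝ)
    (hpos : ∀ S, 0 < m S)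
    (hempty : m ∅ = 1)
    (hexch : ∀ S S' : Finset (Fin n), S.val.map y = S'.val.map y → m S = m S')
    (P : ℕ) (hP1 : 1 ≤ P) (hP2 : P ≤ n - 1) :
    ∑ p ∈ Finset.Icc 1 P, ((n.choose p : ℝ))⁻¹ *
      ∑ T ∈ (Finset.univ : Finset (Fin n)).powersetCard p, (p : ℝ)⁻¹ *
        ∑ j ∈ T, Real.log (m (insert j Tᶜ) / m Tᶜ) =
    ((n.choose P : ℝ))⁻¹ *
      ∑ T ∈ (Finset.univ : Finset (Fin n)).powersetCard P,
        Real.log (m (Finset.univ : Finset (Fin n)) / m Tᶜ) :=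
  stmt6_general n m hpos P hP2
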